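/- arXiv:1901.09176 — 2 statements merged into one kernel-verified Lean document; each statement's English description precedes it below -/
import Mathlib

section
/- For every m ≥ 1 and every x ∈ ℝ^m, ∑_{i=1}^m ψ'(x_i) x_i ≥ ‖x⁺‖₁ - m/2, where ‖x⁺‖₁ = ∑_{i=1}^m max(x_i, 0). -/
/-! Since `ψ'(-1/2) = 1/2` and `ψ'` is nondecreasing with values in `[0, 1]`, the product
`ψ'(t) t` is at least `-1/2` for `t ≤ 0` (split at `t = -1/2`), and equals `t` for `t ≥ 0`.
Summing the pointwise bound `max t 0 - 1/2 ≤ ψ'(t) t` over the coordinates gives the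
inequality. -/

open scoped BigOperators

noncomputable section

/-- The piecewise function `ψ` from Definition 1 of the paper. -/
def psi (t : ℝ) : ℝ :=
  if t ≤ -1 then -(1/2)
  else if t ≤ 0 then (t+1)^3 - (1/2)*(t+1)^4 - 1/2
  else t

open Set

theorem HasDerivWithinAt.hasDerivAt_of_Icc_of_Icc {E : Type*} [NormedAddCommGroup E]
    [NormedSpace ℝ E] {f : ℝ → E} {f' : E} {a b c : ℝ} (hab : a < b) (hbc : b < c)
    (hl : HasDerivWithinAt f f' (Icc a b) b) (hr : HasDerivWithinAt f f' (Icc b c) b) :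
    HasDerivAt f f' b := by
  refine (hl.union hr).hasDerivAt ?_
  rw [Icc_union_Icc_eq_Icc hab.le hbc.le]
  exact Icc_mem_nhds hab hbc

def psiDeriv (t : ℝ) : ℝ :=
  if t ≤ -1 then 0
  else if t ≤ 0 then (t+1)^2 * (1 - 2*t)
  else 1

lemma hasDerivAt_psi_middle (t : ℝ) :
    HasDerivAt (fun t : ℝ => (t+1)^3 - (1/2)*(t+1)^4 - 1/2) ((t+1)^2 * (1 - 2*t)) t := by
  have h : HasDerivAt (fun t : ℝ => t + 1) 1 t := (hasDerivAt_id t).add_const 1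
  refine (((h.fun_pow 3).fun_sub ((h.fun_pow 4).const_mul (1/2))).sub_const (1/2)).congr_deriv ?_
  ring

lemma psi_of_le_neg_one {t : ℝ} (ht : t ≤ -1) : psi t = -(1/2) := by
  simp [psi, ht]

lemma psi_of_mem_Icc {t : ℝ} (ht : t ∈ Icc (-1) 0) :
    psi t = (t+1)^3 - (1/2)*(t+1)^4 - 1/2 := by
  rcases ht.1.eq_or_lt with rfl | h
  · norm_num [psi]
  · simp [psi, not_le.mpr h, ht.2]

lemma psi_of_nonneg {t : ℝ} (ht : 0 ≤ t) : psi t = t := by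
  rcases ht.eq_or_lt with rfl | h
  · norm_num [psi]
  · simp [psi, show ¬t ≤ -1 by linarith, not_le.mpr h]

lemma hasDerivWithinAt_psi_Iic {t : ℝ} (ht : t ≤ -1) :
    HasDerivWithinAt psi 0 (Iic (-1)) t :=
  (hasDerivWithinAt_const t _ (-(1/2) : ℝ)).congr_of_mem (fun _ hs => psi_of_le_neg_one hs) ht

lemma hasDerivWithinAt_psi_Icc {t : ℝ} (ht : t ∈ Icc (-1) 0) :
    HasDerivWithinAt psi ((t+1)^2 * (1 - 2*t)) (Icc (-1) 0) t :=
  (hasDerivAt_psi_middle t).hasDerivWithinAt.congr_of_mem (fun _ hs => psi_of_mem_Icc hs) ht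

lemma hasDerivWithinAt_psi_Ici {t : ℝ} (ht : 0 ≤ t) :
    HasDerivWithinAt psi 1 (Ici 0) t :=
  (hasDerivWithinAt_id t _).congr_of_mem (fun _ hs => psi_of_nonneg hs) ht

lemma hasDerivAt_psi (t : ℝ) : HasDerivAt psi (psiDeriv t) t := by
  rcases lt_trichotomy t (-1) with h | rfl | h
  · simpa [psiDeriv, h.le] using (hasDerivWithinAt_psi_Iic h.le).hasDerivAt (Iic_mem_nhds h)
  · have hr := hasDerivWithinAt_psi_Icc (t := -1) (by norm_num)
    norm_num at hr
    simpa [psiDeriv] using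
      HasDerivWithinAt.hasDerivAt_of_Icc_of_Icc (by norm_num : (-2 : ℝ) < -1)
        (by norm_num : (-1 : ℝ) < 0)
        ((hasDerivWithinAt_psi_Iic le_rfl).mono Icc_subset_Iic_self) hr
  rcases lt_trichotomy t 0 with h0 | rfl | h0
  · simpa [psiDeriv, not_le.mpr h, h0.le] using
      (hasDerivWithinAt_psi_Icc ⟨h.le, h0.le⟩).hasDerivAt (Icc_mem_nhds h h0)
  · have hl := hasDerivWithinAt_psi_Icc (t := 0) (by norm_num)
    norm_num at hl
    simpa [psiDeriv, show ¬(0 : ℝ) ≤ -1 by norm_num] using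
      HasDerivWithinAt.hasDerivAt_of_Icc_of_Icc h (by norm_num : (0 : ℝ) < 1) hl
        ((hasDerivWithinAt_psi_Ici le_rfl).mono Icc_subset_Ici_self)
  · simpa [psiDeriv, show ¬t ≤ -1 by linarith, not_le.mpr h0] using
      (hasDerivWithinAt_psi_Ici h0.le).hasDerivAt (Ici_mem_nhds h0)

lemma deriv_psi : deriv psi = psiDeriv := funext fun t => (hasDerivAt_psi t).deriv

lemma psiDeriv_middle_nonneg {t : ℝ} (ht : t ≤ 1/2) : 0 ≤ (t+1)^2 * (1 - 2*t) := by
  have : 0 ≤ 1 - 2*t := by linarith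
  positivity

-- `1 - (t+1)² (1 - 2t) = t² (3 + 2t)`
lemma psiDeriv_middle_le_one {t : ℝ} (ht : -3/2 ≤ t) : (t+1)^2 * (1 - 2*t) ≤ 1 := by
  nlinarith [mul_nonneg (sq_nonneg t) (show 0 ≤ 3 + 2*t by linarith)]

-- `1/2 - (t+1)² (1 - 2t) = s (2s² - 3/2)` with `s = t + 1/2`
lemma psiDeriv_middle_le_half {t : ℝ} (ht : -1 ≤ t) (ht' : t ≤ -1/2) :
    (t+1)^2 * (1 - 2*t) ≤ 1/2 := by
  nlinarith [mul_nonneg (show 0 ≤ -(t + 1/2) by linarith)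
    (show 0 ≤ 3/2 - 2*(t + 1/2)^2 by nlinarith)]

lemma sub_half_le_psiDeriv_mul (t : ℝ) : max t 0 - 1/2 ≤ psiDeriv t * t := by
  unfold psiDeriv
  split_ifs with h₁ h₂
  · rw [max_eq_right (by linarith)]
    norm_num
  · rw [max_eq_right h₂]
    have h₀ := psiDeriv_middle_nonneg (t := t) (by linarith)
    rcases le_total t (-1/2) with h | h
    · nlinarith [psiDeriv_middle_le_half (not_le.mp h₁).le h]
    · nlinarith [psiDeriv_middle_le_one (t := t) (by linarith)]
  · rw [max_eq_left (not_le.mp h₂).le]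
    linarith

theorem stmt_1_general (m : ℕ) (x : Fin m → ℝ) :
    (∑ i, max (x i) 0) - (m : ℝ) / 2 ≤ ∑ i, deriv psi (x i) * x i := by
  calc (∑ i, max (x i) 0) - (m : ℝ) / 2 = ∑ i, (max (x i) 0 - 1/2) := by
        simp only [Finset.sum_sub_distrib, Finset.sum_const, Finset.card_univ, Fintype.card_fin,
          nsmul_eq_mul]
        ring
    _ ≤ ∑ i, deriv psi (x i) * x i := by
        rw [deriv_psi]
        exact Finset.sum_le_sum fun i _ => sub_half_le_psiDeriv_mul (x i)

/-- For every `m ≥ 1` and `x ∈ ℝ^m`, `∑ i, ψ'(x_i) x_i ≥ ‖x⁺‖₁ - m/2`. -/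
theorem stmt_1 (m : ℕ) (hm : 1 ≤ m) (x : Fin m → ℝ) :
    (∑ i, max (x i) 0) - (m : ℝ) / 2 ≤ ∑ i, deriv psi (x i) * x i :=
  stmt_1_general m x

end
end

section
/- There exists a positive constant κ̂ (depending only on m, α, the μ_i, and the ξ_i) such that I_α(F - F_{1,t})(0) ≥ κ̂ t^{1-α} for all t ≥ 1. -/
open scoped BigOperators
open MeasureTheory

noncomputable section

/-- `χ̆(t) = 1 + ψ(t)`. -/
def chibreve (t : ℝ) : ℝ := 1 + psi t

/-- `χ_R(t) = R + χ(t-R)` where `χ(t) = -χ̆(-t)`; explicitly `χ_R(t) = R - χ̆(R-t)`. -/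
def chiR (R t : ℝ) : ℝ := R - chibreve (R - t)

/-- `F(x) = χ̆(⟨e, M⁻¹x⟩) = χ̆(∑ i, x_i/μ_i)`. -/
def Ffun (m : ℕ) (μ : Fin m → ℝ) (x : Fin m → ℝ) : ℝ := chibreve (∑ i, x i / μ i)

/-- The difference `F - F_{1,t}` where `F_{1,t} = χ_t ∘ F`. -/
def Fdiff (m : ℕ) (μ : Fin m → ℝ) (t : ℝ) (x : Fin m → ℝ) : ℝ :=
  Ffun m μ x - chiR t (Ffun m μ x)

/-- The anisotropic `α`-stable non-local operator
`I_α f(x) = ∑ i, ξ_i ∫_{ℝ∖{0}} (f(x + y e_i) - f(x) - y ∂_i f(x)) |y|^{-(1+α)} dy`. -/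
def Ialpha (m : ℕ) (α : ℝ) (ξ : Fin m → ℝ) (f : (Fin m → ℝ) → ℝ)
    (x : Fin m → ℝ) : ℝ :=
  ∑ i, ξ i * ∫ y : ℝ,
    (f (x + Pi.single i y) - f x - y * fderiv ℝ f x (Pi.single i 1)) / |y| ^ (1 + α)

/-- Absolute convergence of the integrals defining `I_α f(x)`. -/
def IalphaConv (m : ℕ) (α : ℝ) (f : (Fin m → ℝ) → ℝ) (x : Fin m → ℝ) : Prop :=
  ∀ i : Fin m, Integrable (fun y : ℝ =>
    (f (x + Pi.single i y) - f x - y * fderiv ℝ f x (Pi.single i 1)) / |y| ^ (1 + α))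

/-! For `t ≥ 1` we have `F - F_{1,t} = 1 + q (F - t)` with `q u = u + ψ(-u)`. Since `q` vanishes
for `u ≤ 0` and is bounded by `u³` for `u ≥ 0`, while `F(0) = 1`, the function `F - F_{1,t}` is flat
to third order at the origin, so the gradient term of `I_α` drops out. Along `e_i` the remaining
integrand is nonnegative, integrable (of size `y^{2-α}` near `0` and `y^{-α}` at infinity), and at
least `y^{-α} / (2 μ_i)` for `y ≥ 2 μ_i t`; integrating over this tail gives `c t^{1-α}`. -/

open Set Filter Asymptotics

def psiDefect (u : ℝ) : ℝ := u + psi (-u)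

lemma psi_of_nonneg_s12 {u : ℝ} (h : 0 ≤ u) : psi u = u := by
  rcases h.eq_or_lt with rfl | h
  · norm_num [psi]
  · simp [psi, h.not_ge, (show ¬u ≤ -1 by linarith)]

lemma psi_nonpos {u : ℝ} (h : u ≤ 0) : psi u ≤ 0 := by
  unfold psi
  split_ifs
  · norm_num
  · nlinarith [sq_nonneg (u + 1), sq_nonneg u, sq_nonneg ((u + 1) ^ 2 - 1)]

lemma psi_le_abs (u : ℝ) : psi u ≤ |u| := by
  rcases le_or_gt 0 u with h | h
  · exact (psi_of_nonneg_s12 h).trans_le (le_abs_self u)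
  · exact (psi_nonpos h.le).trans (abs_nonneg u)

lemma measurable_psi : Measurable psi := by
  unfold psi
  exact Measurable.ite measurableSet_Iic measurable_const
    (Measurable.ite measurableSet_Iic (by fun_prop) measurable_id)

lemma psiDefect_of_nonpos {u : ℝ} (h : u ≤ 0) : psiDefect u = 0 := by
  rw [psiDefect, psi_of_nonneg_s12 (neg_nonneg.2 h), add_neg_cancel]

lemma psiDefect_of_one_le {u : ℝ} (h : 1 ≤ u) : psiDefect u = u - 1 / 2 := by
  rw [psiDefect, psi, if_pos (by linarith)]
  ring

lemma psiDefect_of_mem_Ioo {u : ℝ} (h : u ∈ Ioo 0 1) : psiDefect u = u ^ 3 - u ^ 4 / 2 := by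
  rw [psiDefect, psi, if_neg (by linarith [h.2]), if_pos (by linarith [h.1])]
  ring

lemma psiDefect_nonneg (u : ℝ) : 0 ≤ psiDefect u := by
  rcases le_or_gt u 0 with h0 | h0
  · rw [psiDefect_of_nonpos h0]
  rcases le_or_gt 1 u with h1 | h1
  · rw [psiDefect_of_one_le h1]
    linarith
  · rw [psiDefect_of_mem_Ioo ⟨h0, h1⟩]
    nlinarith [pow_pos h0 3]

lemma psiDefect_le_pow_three_of_le {u c : ℝ} (h : u ≤ c) (hc : 0 ≤ c) :
    psiDefect u ≤ c ^ 3 := by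
  rcases le_or_gt u 0 with h0 | h0
  · rw [psiDefect_of_nonpos h0]
    positivity
  have hcube : u ^ 3 ≤ c ^ 3 := pow_le_pow_left₀ h0.le h 3
  rcases le_or_gt 1 u with h1 | h1
  · rw [psiDefect_of_one_le h1]
    nlinarith [sq_nonneg u, sq_nonneg (u - 1)]
  · rw [psiDefect_of_mem_Ioo ⟨h0, h1⟩]
    nlinarith [pow_pos h0 4]

lemma psiDefect_le_of_le {u c : ℝ} (h : u ≤ c) (hc : 0 ≤ c) : psiDefect u ≤ c := by
  rcases le_or_gt u 0 with h0 | h0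
  · rwa [psiDefect_of_nonpos h0]
  rcases le_or_gt 1 u with h1 | h1
  · rw [psiDefect_of_one_le h1]
    linarith
  · rw [psiDefect_of_mem_Ioo ⟨h0, h1⟩]
    nlinarith [pow_pos h0 2, pow_pos h0 3]

lemma measurable_psiDefect : Measurable psiDefect :=
  measurable_id.add (measurable_psi.comp measurable_neg)

theorem hasFDerivAt_zero_of_norm_sub_le_pow {E F : Type*} [NormedAddCommGroup E]
    [NormedSpace ℝ E] [NormedAddCommGroup F] [NormedSpace ℝ F] {f : E → F} {C : ℝ} {n : ℕ}
    (hn : 1 < n) (h : ∀ x, ‖f x - f 0‖ ≤ C * ‖x‖ ^ n) : HasFDerivAt f (0 : E →L[ℝ] F) 0 := by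
  refine hasFDerivAt_iff_isLittleO_nhds_zero.2 (IsBigO.trans_isLittleO ?_ (isLittleO_norm_pow_id hn))
  refine IsBigO.of_bound C (Eventually.of_forall fun x => ?_)
  simpa using h x

section Fdiff

variable {m : ℕ} {μ : Fin m → ℝ} {t : ℝ}

lemma Fdiff_eq_one_add_psiDefect (x : Fin m → ℝ) :
    Fdiff m μ t x = 1 + psiDefect (Ffun m μ x - t) := by
  rw [Fdiff, chiR, chibreve, psiDefect, neg_sub]
  ring

lemma Ffun_zero : Ffun m μ 0 = 1 := by
  simp [Ffun, chibreve, psi_of_nonneg_s12 le_rfl]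

lemma Fdiff_zero (ht : 1 ≤ t) : Fdiff m μ t 0 = 1 := by
  rw [Fdiff_eq_one_add_psiDefect, Ffun_zero, psiDefect_of_nonpos (by linarith), add_zero]

lemma Ffun_single (i : Fin m) (y : ℝ) : Ffun m μ (Pi.single i y) = 1 + psi (y / μ i) := by
  rw [Ffun, chibreve, Finset.sum_eq_single_of_mem i (Finset.mem_univ i)
    fun j _ hj => by rw [Pi.single_eq_of_ne hj, zero_div], Pi.single_eq_same]

lemma Ffun_le (hμ : ∀ i, 0 < μ i) (x : Fin m → ℝ) :
    Ffun m μ x ≤ 1 + (∑ i, (μ i)⁻¹) * ‖x‖ := by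
  have hsum : |∑ i, x i / μ i| ≤ (∑ i, (μ i)⁻¹) * ‖x‖ := calc
    |∑ i, x i / μ i| ≤ ∑ i, |x i / μ i| := Finset.abs_sum_le_sum_abs _ _
    _ ≤ ∑ i, (μ i)⁻¹ * ‖x‖ := Finset.sum_le_sum fun i _ => by
      rw [abs_div, abs_of_pos (hμ i), div_eq_inv_mul, ← Real.norm_eq_abs]
      exact mul_le_mul_of_nonneg_left (norm_le_pi_norm x i) (inv_nonneg.2 (hμ i).le)
    _ = (∑ i, (μ i)⁻¹) * ‖x‖ := (Finset.sum_mul ..).symm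
  rw [Ffun, chibreve]
  linarith [psi_le_abs (∑ i, x i / μ i)]

lemma hasFDerivAt_Fdiff_zero (hμ : ∀ i, 0 < μ i) (ht : 1 ≤ t) :
    HasFDerivAt (Fdiff m μ t) (0 : (Fin m → ℝ) →L[ℝ] ℝ) 0 := by
  set K := ∑ i, (μ i)⁻¹
  have hK : 0 ≤ K := Finset.sum_nonneg fun i _ => inv_nonneg.2 (hμ i).le
  refine hasFDerivAt_zero_of_norm_sub_le_pow (C := K ^ 3) (n := 3) (by norm_num) fun x => ?_
  have hdefect : psiDefect (Ffun m μ x - t) ≤ (K * ‖x‖) ^ 3 :=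
    psiDefect_le_pow_three_of_le (by linarith [Ffun_le hμ x]) (by positivity)
  rw [Fdiff_zero ht, Fdiff_eq_one_add_psiDefect, add_sub_cancel_left, Real.norm_eq_abs,
    abs_of_nonneg (psiDefect_nonneg _), ← mul_pow]
  exact hdefect

end Fdiff

section DirectionalIntegrand

variable {c α t : ℝ}

/-- The integrand of `I_α (F - F_{1,t}) (0)` in the direction `e_i`, with `c = μ_i`. -/
def directionalIntegrand (c α t y : ℝ) : ℝ := psiDefect (1 + psi (y / c) - t) / |y| ^ (1 + α)

lemma directionalIntegrand_nonneg (y : ℝ) : 0 ≤ directionalIntegrand c α t y :=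
  div_nonneg (psiDefect_nonneg _) (Real.rpow_nonneg (abs_nonneg y) _)

lemma directionalIntegrand_of_nonpos (hc : 0 < c) (ht : 1 ≤ t) {y : ℝ} (hy : y ≤ 0) :
    directionalIntegrand c α t y = 0 := by
  have : psi (y / c) ≤ 0 := psi_nonpos (div_nonpos_of_nonpos_of_nonneg hy hc.le)
  rw [directionalIntegrand, psiDefect_of_nonpos (by linarith), zero_div]

lemma directionalIntegrand_of_pos (hc : 0 < c) {y : ℝ} (hy : 0 < y) :
    directionalIntegrand c α t y = psiDefect (1 + y / c - t) / y ^ (1 + α) := by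
  rw [directionalIntegrand, psi_of_nonneg_s12 (div_pos hy hc).le, abs_of_pos hy]

lemma measurable_directionalIntegrand : Measurable (directionalIntegrand c α t) := by
  unfold directionalIntegrand
  exact (measurable_psiDefect.comp
    (((measurable_psi.comp (measurable_id.div_const c)).const_add 1).sub_const t)).div (by fun_prop)

lemma div_pow_div_rpow_one_add {y : ℝ} (hy : 0 < y) (n : ℕ) :
    (y / c) ^ n / y ^ (1 + α) = (c ^ n)⁻¹ * y ^ ((n : ℝ) - (1 + α)) := by
  rw [Real.rpow_sub hy, Real.rpow_natCast, div_pow]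
  ring

lemma integrableOn_Ioi_zero_of_le_rpow {f : ℝ → ℝ} {a b A B : ℝ} (hc : 0 < c) (ha : -1 < a)
    (hb : b < -1) (hf : AEStronglyMeasurable f (volume.restrict (Ioi 0)))
    (hzero : ∀ y ∈ Ioc 0 c, ‖f y‖ ≤ A * y ^ a) (hinf : ∀ y ∈ Ioi c, ‖f y‖ ≤ B * y ^ b) :
    IntegrableOn f (Ioi 0) := by
  rw [← Ioc_union_Ioi_eq_Ioi hc.le]
  refine IntegrableOn.union ?_ ?_
  · have hmaj : IntegrableOn (fun y => A * y ^ a) (Ioc 0 c) :=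
      ((intervalIntegrable_iff_integrableOn_Ioc_of_le hc.le).1
        (intervalIntegral.intervalIntegrable_rpow' ha)).const_mul A
    exact hmaj.mono' (hf.mono_measure (Measure.restrict_mono Ioc_subset_Ioi_self le_rfl))
      (ae_restrict_of_forall_mem measurableSet_Ioc hzero)
  · exact ((integrableOn_Ioi_rpow_of_lt hb hc).const_mul B).mono'
      (hf.mono_measure (Measure.restrict_mono (Ioi_subset_Ioi hc.le) le_rfl))
      (ae_restrict_of_forall_mem measurableSet_Ioi hinf)

lemma integrable_directionalIntegrand (hc : 0 < c) (hα1 : 1 < α) (hα3 : α < 3) (ht : 1 ≤ t) :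
    Integrable (directionalIntegrand c α t) := by
  rw [← integrableOn_univ, ← Iic_union_Ioi (a := (0 : ℝ))]
  refine IntegrableOn.union ?_ ?_
  · exact integrableOn_zero.congr_fun
      (fun y hy => (directionalIntegrand_of_nonpos hc ht hy).symm) measurableSet_Iic
  refine integrableOn_Ioi_zero_of_le_rpow (a := 3 - (1 + α)) (b := 1 - (1 + α))
    (A := (c ^ 3)⁻¹) (B := (c ^ 1)⁻¹) hc
    (by linarith) (by linarith) measurable_directionalIntegrand.aestronglyMeasurable
    (fun y hy => ?_) (fun y hy => ?_)
  · have hy0 : 0 < y := hy.1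
    rw [Real.norm_eq_abs, abs_of_nonneg (directionalIntegrand_nonneg y),
      directionalIntegrand_of_pos hc hy0]
    have := div_pow_div_rpow_one_add (α := α) hy0 (c := c) 3
    push_cast at this
    rw [← this]
    gcongr
    exact psiDefect_le_pow_three_of_le (by linarith) (div_pos hy0 hc).le
  · have hy0 : 0 < y := hc.trans hy
    rw [Real.norm_eq_abs, abs_of_nonneg (directionalIntegrand_nonneg y),
      directionalIntegrand_of_pos hc hy0]
    have := div_pow_div_rpow_one_add (α := α) hy0 (c := c) 1
    push_cast at this
    rw [← this, pow_one]
    gcongr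
    exact psiDefect_le_of_le (by linarith) (div_pos hy0 hc).le

lemma le_integral_directionalIntegrand (hc : 0 < c) (hα1 : 1 < α) (hα3 : α < 3) (ht : 1 ≤ t) :
    (2 * c) ^ (-α) / (α - 1) * t ^ (1 - α) ≤ ∫ y, directionalIntegrand c α t y := by
  have h2c : 0 < 2 * c := by positivity
  have hT : 0 < 2 * c * t := by positivity
  have htail : ∀ y ∈ Ioi (2 * c * t), (2 * c)⁻¹ * y ^ (-α) ≤ directionalIntegrand c α t y := by
    intro y hy
    have hy0 : 0 < y := hT.trans hy
    have hyc : 2 * t ≤ y / c := by rw [le_div_iff₀ hc]; linarith [mem_Ioi.1 hy]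
    have hhalf : y / (2 * c) ≤ psiDefect (1 + y / c - t) := by
      rw [psiDefect_of_one_le (by linarith), div_mul_eq_div_div_swap]
      linarith
    have := div_pow_div_rpow_one_add (α := α) hy0 (c := 2 * c) 1
    rw [pow_one, pow_one, Nat.cast_one, show (1 : ℝ) - (1 + α) = -α by ring] at this
    rw [← this, directionalIntegrand_of_pos hc hy0]
    gcongr
  have hintegral : ∫ y in Ioi (2 * c * t), (2 * c)⁻¹ * y ^ (-α)
      = (2 * c) ^ (-α) / (α - 1) * t ^ (1 - α) := by
    rw [integral_const_mul, integral_Ioi_rpow_of_lt (by linarith) hT, Real.mul_rpow h2c.le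
      (by linarith), Real.rpow_add h2c, Real.rpow_one, show -α + 1 = 1 - α by ring]
    have : α - 1 ≠ 0 := by linarith
    have : 1 - α ≠ 0 := by linarith
    field_simp
    ring
  have hint := integrable_directionalIntegrand hc hα1 hα3 ht
  calc (2 * c) ^ (-α) / (α - 1) * t ^ (1 - α)
      = ∫ y in Ioi (2 * c * t), (2 * c)⁻¹ * y ^ (-α) := hintegral.symm
    _ ≤ ∫ y in Ioi (2 * c * t), directionalIntegrand c α t y :=
      setIntegral_mono_on ((integrableOn_Ioi_rpow_of_lt (by linarith) hT).const_mul _)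
        hint.integrableOn measurableSet_Ioi htail
    _ ≤ ∫ y, directionalIntegrand c α t y :=
      setIntegral_le_integral hint (ae_of_all _ directionalIntegrand_nonneg)

end DirectionalIntegrand

lemma Ialpha_Fdiff_zero {m : ℕ} {μ : Fin m → ℝ} (ξ : Fin m → ℝ) (α : ℝ) {t : ℝ}
    (hμ : ∀ i, 0 < μ i) (ht : 1 ≤ t) :
    Ialpha m α ξ (Fdiff m μ t) 0 = ∑ i, ξ i * ∫ y, directionalIntegrand (μ i) α t y := by
  simp only [Ialpha, (hasFDerivAt_Fdiff_zero hμ ht).fderiv, Fdiff_zero ht, zero_add,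
    Fdiff_eq_one_add_psiDefect, Ffun_single, add_sub_cancel_left, directionalIntegrand,
    zero_apply, mul_zero, sub_zero]

/-- There is a constant `κ̂ > 0` (depending only on `m`, `α`, the `μ_i` and the
`ξ_i`) such that `I_α(F - F_{1,t})(0) ≥ κ̂ t^{1-α}` for all `t ≥ 1`. -/
theorem stmt_12 (m : ℕ) (hm : 1 ≤ m) (μ ξ : Fin m → ℝ)
    (hμ : ∀ i, 0 < μ i) (hξ : ∀ i, 0 < ξ i)
    (α : ℝ) (hα1 : 1 < α) (hα2 : α < 2) :
    ∃ κ : ℝ, 0 < κ ∧ ∀ t : ℝ, 1 ≤ t →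
      κ * t ^ (1 - α) ≤ Ialpha m α ξ (Fdiff m μ t) 0 := by
  let i₀ : Fin m := ⟨0, hm⟩
  have hκ : 0 < (2 * μ i₀) ^ (-α) / (α - 1) :=
    div_pos (Real.rpow_pos_of_pos (by linarith [hμ i₀]) _) (by linarith)
  refine ⟨ξ i₀ * ((2 * μ i₀) ^ (-α) / (α - 1)), mul_pos (hξ i₀) hκ, fun t ht => ?_⟩
  rw [Ialpha_Fdiff_zero ξ α hμ ht, mul_assoc]
  calc ξ i₀ * ((2 * μ i₀) ^ (-α) / (α - 1) * t ^ (1 - α))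
      ≤ ξ i₀ * ∫ y, directionalIntegrand (μ i₀) α t y :=
        mul_le_mul_of_nonneg_left
          (le_integral_directionalIntegrand (hμ i₀) hα1 (by linarith) ht) (hξ i₀).le
    _ ≤ ∑ i, ξ i * ∫ y, directionalIntegrand (μ i) α t y :=
        Finset.single_le_sum (fun i _ => mul_nonneg (hξ i).le
          (integral_nonneg directionalIntegrand_nonneg)) (Finset.mem_univ i₀)

end
end
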